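/- Let m ≥ 1, n = m+1, h > 0, z_F > 0, and let D ∈ ℝⁿ have entries D_1,…,D_n with D_k > 0 for all k. With the convention v₀ := 0 and D_{k+1/2} := (D_k + D_{k+1})/2, set Term₁(v) = (1/z_F)·Σ_{k=1}^{m} h·D_{k+1/2}·((v_k − v_{k−1})/h)² and S_h = z_F·Σ_{k=1}^{m} h/D_{k+1/2}. Then for every v ∈ ℝ^m and every 1 ≤ i ≤ m, one has v_i² ≤ Term₁(v)·S_h; in particular max_{1≤i≤m} v_i² ≤ Term₁(v)·S_h (a discrete Sobolev-type bound). -/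

import Mathlib

open Finset

/-- 1-based access to the entries of a finite vector, with value `0` at index `0`
and out of range (this encodes the convention `v₀ = 0`). -/
def pad1 {n : ℕ} (v : Fin n → ℝ) : ℕ → ℝ :=
  fun k => if hk : k - 1 < n then (if k = 0 then 0 else v ⟨k - 1, hk⟩) else 0

/-- `D_{k+1/2} = (D_k + D_{k+1})/2` (1-based mathematical indexing). -/
noncomputable def Dhalf {n : ℕ} (D : Fin n → ℝ) (k : ℕ) : ℝ :=
  (pad1 D k + pad1 D (k + 1)) / 2

/-- `Term₁(v) = (1/z_F) Σ_{k=1}^m h D_{k+1/2} ((v_k − v_{k−1})/h)²` with `v₀ = 0`. -/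
noncomputable def term1 (m : ℕ) (h zF : ℝ) (D : Fin (m + 1) → ℝ) (v : Fin m → ℝ) : ℝ :=
  (1 / zF) * ∑ k ∈ Finset.Icc 1 m,
    h * Dhalf D k * ((pad1 v k - pad1 v (k - 1)) / h) ^ 2

/-- `S_h = z_F Σ_{k=1}^m h / D_{k+1/2}`. -/
noncomputable def Sh (m : ℕ) (h zF : ℝ) (D : Fin (m + 1) → ℝ) : ℝ :=
  zF * ∑ k ∈ Finset.Icc 1 m, h / Dhalf D k

/-
Writing `v_i = Σ_{k ≤ i} (v_k - v_{k-1})` (telescoping, using `v₀ = 0`) and splitting each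
increment as `√(D_{k+1/2}/h) (v_k - v_{k-1}) · √(h/D_{k+1/2})`, Cauchy–Schwarz bounds `v_i²`
by the product of the weighted energy `Σ D_{k+1/2}/h (v_k - v_{k-1})²` and `Σ h/D_{k+1/2}`,
both sums running over `k ≤ i`. Extending them to `k ≤ m` only adds nonnegative terms, and
the factors `1/z_F` and `z_F` cancel in the product `Term₁(v) · S_h`.
-/

theorem sum_Icc_one_sub_pred {M : Type*} [AddCommGroup M] (u : ℕ → M) (N : ℕ) :
    ∑ k ∈ Icc 1 N, (u k - u (k - 1)) = u N - u 0 := by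
  induction N with
  | zero => simp
  | succ N ih =>
    rw [sum_Icc_succ_top (by omega), ih, Nat.add_sub_cancel]
    abel

theorem sq_sum_le_sum_mul_sq_mul_sum_inv {ι : Type*} {s t : Finset ι} (hst : s ⊆ t)
    {w a : ι → ℝ} (hw : ∀ i ∈ t, 0 < w i) :
    (∑ i ∈ s, a i) ^ 2 ≤ (∑ i ∈ t, w i * a i ^ 2) * ∑ i ∈ t, (w i)⁻¹ := by
  have hw_inv : ∀ i ∈ t, 0 ≤ (w i)⁻¹ := fun i hi => (inv_pos.2 (hw i hi)).le
  have hwa : ∀ i ∈ t, 0 ≤ w i * a i ^ 2 := fun i hi => by have := hw i hi; positivity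
  calc (∑ i ∈ s, a i) ^ 2 ≤ (∑ i ∈ s, w i * a i ^ 2) * ∑ i ∈ s, (w i)⁻¹ := by
        refine sum_sq_le_sum_mul_sum_of_sq_le_mul s (fun i hi => hwa i (hst hi))
          (fun i hi => hw_inv i (hst hi)) (fun i hi => ?_)
        rw [mul_right_comm, mul_inv_cancel₀ (hw i (hst hi)).ne', one_mul]
    _ ≤ (∑ i ∈ t, w i * a i ^ 2) * ∑ i ∈ t, (w i)⁻¹ :=
        mul_le_mul (sum_le_sum_of_subset_of_nonneg hst fun i hi _ => hwa i hi)
          (sum_le_sum_of_subset_of_nonneg hst fun i hi _ => hw_inv i hi)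
          (sum_nonneg fun i hi => hw_inv i (hst hi)) (sum_nonneg hwa)

theorem pad1_zero {n : ℕ} (v : Fin n → ℝ) : pad1 v 0 = 0 := by
  simp [pad1]

theorem pad1_succ {n : ℕ} (v : Fin n → ℝ) {j : ℕ} (hj : j < n) :
    pad1 v (j + 1) = v ⟨j, hj⟩ := by
  simp [pad1, hj]

theorem Dhalf_pos {n : ℕ} {D : Fin n → ℝ} (hD : ∀ k, 0 < D k) {k : ℕ} (hk : 1 ≤ k)
    (hkn : k < n) : 0 < Dhalf D k := by
  obtain ⟨j, rfl⟩ := Nat.exists_eq_add_of_le' hk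
  rw [Dhalf, pad1_succ D (by omega), pad1_succ D hkn]
  linarith [hD ⟨j, by omega⟩, hD ⟨j + 1, hkn⟩]

theorem stmt_13_general (m : ℕ) (h zF : ℝ) (hh : 0 < h) (hzF : 0 < zF)
    (D : Fin (m + 1) → ℝ) (hD : ∀ k, 0 < D k) :
    ∀ (v : Fin m → ℝ) (i : Fin m),
      (v i) ^ 2 ≤ term1 m h zF D v * Sh m h zF D := by
  intro v i
  have hsub : Icc 1 ((i : ℕ) + 1) ⊆ Icc 1 m := Icc_subset_Icc_right i.isLt
  have hweight : ∀ k ∈ Icc 1 m, 0 < Dhalf D k / h := fun k hk =>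
    div_pos (Dhalf_pos hD (mem_Icc.1 hk).1 (Nat.lt_succ_of_le (mem_Icc.1 hk).2)) hh
  have hvi : v i = ∑ k ∈ Icc 1 ((i : ℕ) + 1), (pad1 v k - pad1 v (k - 1)) := by
    rw [sum_Icc_one_sub_pred, pad1_zero, sub_zero, pad1_succ v i.isLt]
  have hprod : term1 m h zF D v * Sh m h zF D =
      (∑ k ∈ Icc 1 m, Dhalf D k / h * (pad1 v k - pad1 v (k - 1)) ^ 2) *
        ∑ k ∈ Icc 1 m, (Dhalf D k / h)⁻¹ := by
    rw [term1, Sh, mul_mul_mul_comm, one_div_mul_cancel hzF.ne', one_mul]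
    congr 1
    · exact sum_congr rfl fun k _ => by field_simp
    · simp only [inv_div]
  rw [hvi, hprod]
  exact sq_sum_le_sum_mul_sq_mul_sum_inv hsub hweight

theorem stmt_13 (m : ℕ) (hm : 1 ≤ m) (h zF : ℝ) (hh : 0 < h) (hzF : 0 < zF)
    (D : Fin (m + 1) → ℝ) (hD : ∀ k, 0 < D k) :
    ∀ (v : Fin m → ℝ) (i : Fin m),
      (v i) ^ 2 ≤ term1 m h zF D v * Sh m h zF D :=
  stmt_13_general m h zF hh hzF D hD
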